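/- arXiv:0810.2656 — 4 statements merged into one kernel-verified Lean document; each statement's English description precedes it below -/
import Mathlib

section
/- For non-commuting indeterminates X and Y, the homogeneous component of degree 2 of log(e^X e^Y) equals (1/2)[X,Y], where [X,Y] = XY - YX. -/
/- Formal BCH series in the free associative algebra on two non-commuting
variables over ℚ.  A grading variable `t` (the polynomial variable) is used to
extract homogeneous components: the degree-`m` homogeneous component of
`log(e^X e^Y)` is the coefficient of `t^m` in the (sufficiently truncated)
composition of the exponential and logarithm series applied to `t•X`, `t•Y`. -/

noncomputable section

abbrev FA : Type := FreeAlgebra ℚ (Fin 2)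

def Xg : FA := FreeAlgebra.ι ℚ 0
def Yg : FA := FreeAlgebra.ι ℚ 1

/-- Truncated exponential series `∑_{n ≤ N} a^n / n!`. -/
def texp {R : Type*} [Ring R] [Algebra ℚ R] (N : ℕ) (a : R) : R :=
  ∑ n ∈ Finset.range (N + 1), ((n.factorial : ℚ)⁻¹) • a ^ n

/-- Truncated logarithm series `∑_{1 ≤ k ≤ N} (-1)^(k-1) (p-1)^k / k`. -/
def tlog {R : Type*} [Ring R] [Algebra ℚ R] (N : ℕ) (p : R) : R :=
  ∑ k ∈ Finset.range N, (((-1 : ℚ) ^ k) / (k + 1)) • (p - 1) ^ (k + 1)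

def gX : Polynomial FA := Polynomial.C Xg * Polynomial.X
def gY : Polynomial FA := Polynomial.C Yg * Polynomial.X

/-! Since `p - 1` has no constant term, `(p - 1) ^ (k + 1)` has no `t²`-coefficient once `k ≥ 2`,
so only the first two terms of the logarithm contribute: `log p` has `t²`-coefficient
`p₂ - p₁² / 2`. For `p = e^{tX} e^{tY}` we have `p₁ = X + Y` and `p₂ = X²/2 + XY + Y²/2`,
and `p₂ - (X + Y)² / 2 = (XY - YX) / 2`. -/

open Polynomial

section Ring

variable {R : Type*} [Ring R]

theorem coeff_pow_eq_zero_of_coeff_zero_eq_zero {p : R[X]} (hp : p.coeff 0 = 0) {n k : ℕ}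
    (hn : n < k) : (p ^ k).coeff n = 0 := by
  obtain ⟨g, rfl⟩ := X_dvd_iff.2 hp
  rw [(commute_X g).mul_pow, coeff_X_pow_mul', if_neg (by omega)]

theorem coeff_mul_one (p q : R[X]) :
    (p * q).coeff 1 = p.coeff 0 * q.coeff 1 + p.coeff 1 * q.coeff 0 := by
  simp [coeff_mul, Finset.Nat.sum_antidiagonal_eq_sum_range_succ_mk, Finset.sum_range_succ]

theorem coeff_mul_two (p q : R[X]) :
    (p * q).coeff 2 =
      p.coeff 0 * q.coeff 2 + p.coeff 1 * q.coeff 1 + p.coeff 2 * q.coeff 0 := by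
  simp [coeff_mul, Finset.Nat.sum_antidiagonal_eq_sum_range_succ_mk, Finset.sum_range_succ]

theorem coeff_sq_two_of_coeff_zero_eq_zero {p : R[X]} (hp : p.coeff 0 = 0) :
    (p ^ 2).coeff 2 = p.coeff 1 ^ 2 := by
  rw [sq, coeff_mul_two, hp, zero_mul, mul_zero, zero_add, add_zero, sq]

variable [Algebra ℚ R]

theorem coeff_texp_C_mul_X (a : R) {N k : ℕ} (hk : k ≤ N) :
    (texp N (C a * X)).coeff k = (k.factorial : ℚ)⁻¹ • a ^ k := by
  have hpow (n : ℕ) : (C a * X) ^ n = C (a ^ n) * X ^ n := by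
    rw [((commute_X (C a)).symm.mul_pow n), C_pow]
  simp only [texp, finsetSum_coeff, coeff_smul, hpow, coeff_C_mul_X_pow, smul_ite, smul_zero]
  rw [Finset.sum_ite_eq, if_pos (Finset.mem_range.2 (by omega))]

theorem coeff_tlog_two {p : R[X]} (hp : p.coeff 0 = 1) {N : ℕ} (hN : 2 ≤ N) :
    (tlog N p).coeff 2 = p.coeff 2 - (1 / 2 : ℚ) • p.coeff 1 ^ 2 := by
  have hp' : (p - 1).coeff 0 = 0 := by simp [hp]
  have hhigh :
      ∑ k ∈ Finset.Ico 2 N, (((-1 : ℚ) ^ k / (k + 1)) • (p - 1) ^ (k + 1)).coeff 2 = 0 :=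
    Finset.sum_eq_zero fun k hk => by
      rw [coeff_smul, coeff_pow_eq_zero_of_coeff_zero_eq_zero hp'
        (Nat.lt_succ_of_le (Finset.mem_Ico.1 hk).1), smul_zero]
  rw [tlog, finsetSum_coeff, ← Finset.sum_range_add_sum_Ico _ hN, hhigh, add_zero]
  have hp1 : (p - 1).coeff 1 = p.coeff 1 := by
    rw [coeff_sub, coeff_one, if_neg one_ne_zero, sub_zero]
  have hp2 : (p - 1).coeff 2 = p.coeff 2 := by
    rw [coeff_sub, coeff_one, if_neg two_ne_zero, sub_zero]
  rw [Finset.sum_range_succ, Finset.sum_range_one, coeff_smul, coeff_smul, pow_one, hp2,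
    coeff_sq_two_of_coeff_zero_eq_zero hp', hp1]
  module

end Ring

/-- the homogeneous component of degree 2 of `log(e^X e^Y)`
equals `(1/2)[X,Y]`, where `[X,Y] = XY - YX`. -/
theorem bch_degree_two :
    ∀ N : ℕ, 2 ≤ N →
      (tlog N (texp N gX * texp N gY)).coeff 2
        = (1 / 2 : ℚ) • (Xg * Yg - Yg * Xg) := by
  intro N hN
  have h0 (a : FA) : (texp N (C a * X)).coeff 0 = 1 := by
    simpa using coeff_texp_C_mul_X a (k := 0) (by omega)
  have h1 (a : FA) : (texp N (C a * X)).coeff 1 = a := by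
    simpa using coeff_texp_C_mul_X a (k := 1) (by omega)
  have h2 (a : FA) : (texp N (C a * X)).coeff 2 = (1 / 2 : ℚ) • a ^ 2 := by
    simpa using coeff_texp_C_mul_X a hN
  rw [coeff_tlog_two (by rw [mul_coeff_zero, gX, gY, h0, h0, one_mul]) hN, coeff_mul_one,
    coeff_mul_two]
  simp only [gX, gY, h0, h1, h2, sq, one_mul, mul_one, add_mul, mul_add, mul_smul_comm]
  module
end
end

section
/- For non-commuting indeterminates X and Y, the homogeneous component of degree 3 of log(e^X e^Y) equals (1/12)[X,[X,Y]] - (1/12)[Y,[X,Y]]. -/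
/- Formal BCH series in the free associative algebra on two non-commuting
variables over ℚ.  A grading variable `t` (the polynomial variable) is used to
extract homogeneous components: the degree-`m` homogeneous component of
`log(e^X e^Y)` is the coefficient of `t^m` in the (sufficiently truncated)
composition of the exponential and logarithm series applied to `t•X`, `t•Y`. -/

noncomputable section

open Polynomial

lemma texp_coeff (a : FA) (N d : ℕ) (h : d ≤ N) :
    (texp N (C a * X)).coeff d = ((d.factorial : ℚ)⁻¹) • a ^ d := by
  rw [texp, Polynomial.finset_sum_coeff, Finset.sum_eq_single d]
  · rw [(Polynomial.commute_X (C a)).symm.mul_pow, ← Polynomial.C_pow, Polynomial.coeff_smul,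
      Polynomial.coeff_C_mul, Polynomial.coeff_X_pow, if_pos rfl, mul_one]
  · intro b _ hb
    rw [(Polynomial.commute_X (C a)).symm.mul_pow, ← Polynomial.C_pow, Polynomial.coeff_smul,
      Polynomial.coeff_C_mul, Polynomial.coeff_X_pow, if_neg (Ne.symm hb)]
    simp
  · intro hd; exact absurd (Finset.mem_range.mpr (by omega)) hd

lemma pow_coeff_eq_zero (q : Polynomial FA) (h : q.coeff 0 = 0) (m d : ℕ) (hd : d < m) :
    (q ^ m).coeff d = 0 := by
  obtain ⟨r, hr⟩ := Polynomial.X_dvd_iff.mpr h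
  have hc : Commute (Polynomial.X : Polynomial FA) r := Polynomial.X_mul (p := r)
  rw [hr, hc.mul_pow, Polynomial.coeff_X_pow_mul', if_neg (by omega)]


/-- the homogeneous component of degree 3 of `log(e^X e^Y)`
equals `(1/12)[X,[X,Y]] - (1/12)[Y,[X,Y]]`, where `[A,B] = AB - BA`. -/
theorem bch_degree_three :
    ∀ N : ℕ, 3 ≤ N →
      (tlog N (texp N gX * texp N gY)).coeff 3
        = (1 / 12 : ℚ) • ⁅Xg, ⁅Xg, Yg⁆⁆ - (1 / 12 : ℚ) • ⁅Yg, ⁅Xg, Yg⁆⁆ := by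
  intro N hN
  set p : Polynomial FA := texp N gX * texp N gY with hp
  -- coefficients of p
  have hpc : ∀ d : ℕ, d ≤ 3 → p.coeff d =
      ∑ k ∈ Finset.range (d + 1),
        (((k.factorial : ℚ)⁻¹) • Xg ^ k) * (((d - k).factorial : ℚ)⁻¹ • Yg ^ (d - k)) := by
    intro d hd
    rw [hp, Polynomial.coeff_mul, Finset.Nat.sum_antidiagonal_eq_sum_range_succ_mk]
    refine Finset.sum_congr rfl fun k hk => ?_
    have hk3 : k ≤ d := by simpa using Nat.lt_succ_iff.mp (Finset.mem_range.mp hk)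
    rw [gX, gY, texp_coeff _ _ _ (by omega), texp_coeff _ _ _ (by omega)]
  set q : Polynomial FA := p - 1 with hq
  have hq0 : q.coeff 0 = 0 := by
    rw [hq, Polynomial.coeff_sub, hpc 0 (by norm_num)]
    simp
  have hq1 : q.coeff 1 = Xg + Yg := by
    rw [hq, Polynomial.coeff_sub, hpc 1 (by norm_num)]
    simp [Finset.sum_range_succ, Polynomial.coeff_one, add_comm]
  have hq2 : q.coeff 2 = (2:ℚ)⁻¹ • (Xg*Xg) + Xg*Yg + (2:ℚ)⁻¹ • (Yg*Yg) := by
    rw [hq, Polynomial.coeff_sub, hpc 2 (by norm_num)]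
    simp [Finset.sum_range_succ, pow_two, smul_mul_assoc, mul_smul_comm, Polynomial.coeff_one]
    abel
  have hq3 : q.coeff 3 = (6:ℚ)⁻¹ • (Xg*(Xg*Xg)) + (2:ℚ)⁻¹ • (Xg*(Xg*Yg))
      + (2:ℚ)⁻¹ • (Xg*(Yg*Yg)) + (6:ℚ)⁻¹ • (Yg*(Yg*Yg)) := by
    rw [hq, Polynomial.coeff_sub, hpc 3 (by norm_num)]
    simp [Finset.sum_range_succ, pow_succ, pow_two, smul_mul_assoc, mul_smul_comm,
      Polynomial.coeff_one, Nat.factorial, mul_assoc]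
    abel
  -- coeff 3 of q^2 and q^3
  have hq2p : (q ^ 2).coeff 3 = q.coeff 1 * q.coeff 2 + q.coeff 2 * q.coeff 1 := by
    rw [pow_two, Polynomial.coeff_mul, Finset.Nat.sum_antidiagonal_eq_sum_range_succ_mk]
    simp [Finset.sum_range_succ, hq0]
  have hq3p : (q ^ 3).coeff 3 = (q.coeff 1 * q.coeff 1) * q.coeff 1 := by
    have h2 : ∀ d : ℕ, d ≤ 1 → (q^2).coeff d = 0 := fun d hd =>
      pow_coeff_eq_zero q hq0 2 d (by omega)
    have h22 : (q ^ 2).coeff 2 = q.coeff 1 * q.coeff 1 := by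
      rw [pow_two, Polynomial.coeff_mul, Finset.Nat.sum_antidiagonal_eq_sum_range_succ_mk]
      simp [Finset.sum_range_succ, hq0]
    rw [show (3:ℕ) = 2+1 from rfl, pow_succ, Polynomial.coeff_mul, Finset.Nat.sum_antidiagonal_eq_sum_range_succ_mk]
    simp [Finset.sum_range_succ, hq0, h2 0 (by norm_num), h2 1 (by norm_num), h22]
  -- reduce tlog sum to range 3
  have hlog : (tlog N p).coeff 3 =
      ∑ k ∈ Finset.range 3, (((-1 : ℚ) ^ k) / (k + 1)) • (q ^ (k + 1)).coeff 3 := by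
    rw [tlog, Polynomial.finset_sum_coeff]
    rw [← Finset.sum_subset (Finset.range_subset_range.mpr hN)]
    · exact Finset.sum_congr rfl fun k _ => by rw [Polynomial.coeff_smul, hq]
    · intro k _ hk
      have : 3 < k + 1 := by simp at hk; omega
      rw [Polynomial.coeff_smul, ← hq, pow_coeff_eq_zero q hq0 (k+1) 3 this, smul_zero]
  rw [hlog]
  rw [Finset.sum_range_succ, Finset.sum_range_succ, Finset.sum_range_succ, Finset.sum_range_zero]
  rw [hq2p, hq3p, pow_one, hq1, hq2, hq3]
  simp only [Ring.lie_def]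
  push_cast
  norm_num
  simp only [mul_add, add_mul, mul_sub, sub_mul, smul_add, smul_sub, smul_smul,
    smul_mul_assoc, mul_smul_comm, mul_assoc]
  module
end
end

section
/- Let X = [[α,0],[0,−α]] and Y = [[0,β],[0,0]] be 2×2 complex matrices with 0 < |α| < π, α ≠ 0. Then log(e^X e^Y) = X + (2α/(1 − e^{−2α})) Y, i.e., exp(X + (2α/(1 − e^{−2α})) Y) = e^X e^Y. -/
/-!
For `a ≠ d`, conjugating `diag(a, d)` by the unipotent matrix `!![1, t; 0, 1]` with
`t = b / (d - a)` gives `!![a, b; 0, d]`, so `exp !![a, b; 0, d]` has diagonal `e^a, e^d` and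
corner `b (e^a - e^d) / (a - d)`. For `a = α`, `d = -α`, `b = 2αβ / (1 - e^{-2α})` this corner
is `β e^α`, which is also the corner of `e^X e^Y = diag(e^α, e^{-α}) (1 + Y)` since `Y² = 0`.
The denominator `1 - e^{-2α}` is nonzero because `0 < |2α| < 2π`.
-/

open Matrix

theorem NormedSpace.exp_eq_one_add_of_sq_eq_zero {𝔸 : Type*} [Ring 𝔸] [Algebra ℚ 𝔸]
    [TopologicalSpace 𝔸] [IsTopologicalRing 𝔸] {x : 𝔸} (hx : x ^ 2 = 0) :
    NormedSpace.exp x = 1 + x := by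
  have hvanish : ∀ n ∉ Finset.range 2, (n.factorial⁻¹ : ℚ) • x ^ n = 0 := fun n hn => by
    rw [pow_eq_zero_of_le (by simp at hn; omega) hx, smul_zero]
  simp [NormedSpace.exp_eq_tsum_rat, tsum_eq_sum hvanish, Finset.sum_range_succ]

theorem Complex.exp_ne_one_of_norm_lt_two_pi {z : ℂ} (hz : z ≠ 0) (h : ‖z‖ < 2 * Real.pi) :
    Complex.exp z ≠ 1 := by
  rw [Ne, Complex.exp_eq_one_iff]
  rintro ⟨n, rfl⟩
  have hn : n ≠ 0 := by rintro rfl; simp at hz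
  have hnorm : ‖(n : ℂ) * (2 * Real.pi * Complex.I)‖ = |(n : ℝ)| * (2 * Real.pi) := by
    simp [Complex.norm_intCast, abs_of_pos Real.pi_pos]
  have : (1 : ℝ) ≤ |(n : ℝ)| := by exact_mod_cast Int.one_le_abs hn
  rw [hnorm] at h
  nlinarith [Real.pi_pos]

namespace Matrix

variable {R : Type*} [CommRing R]

def upperUnipotent (t : R) : (Matrix (Fin 2) (Fin 2) R)ˣ where
  val := !![1, t; 0, 1]
  inv := !![1, -t; 0, 1]
  val_inv := by simp [one_fin_two]
  inv_val := by simp [one_fin_two]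

theorem conj_upperUnipotent (t a d : R) :
    (upperUnipotent t : Matrix (Fin 2) (Fin 2) R) * !![a, 0; 0, d]
      * (↑(upperUnipotent t)⁻¹ : Matrix (Fin 2) (Fin 2) R)
      = !![a, t * (d - a); 0, d] := by
  ext i j
  fin_cases i <;> fin_cases j <;> simp [upperUnipotent]
  ring

theorem exp_fin_two_diagonal (a d : ℂ) :
    NormedSpace.exp !![a, 0; 0, d] = !![Complex.exp a, 0; 0, Complex.exp d] := by
  have := exp_diagonal ![a, d]
  rw [diagonal_fin_two, diagonal_fin_two] at this
  simpa [Pi.exp_def, Complex.exp_eq_exp_ℂ] using this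

theorem exp_fin_two_upperTriangular {a d : ℂ} (b : ℂ) (h : a ≠ d) :
    NormedSpace.exp !![a, b; 0, d]
      = !![Complex.exp a, b * (Complex.exp a - Complex.exp d) / (a - d); 0, Complex.exp d] := by
  have hda : d - a ≠ 0 := sub_ne_zero.mpr h.symm
  have hconj := conj_upperUnipotent (b / (d - a)) a d
  rw [div_mul_cancel₀ b hda] at hconj
  have hcorner : b / (d - a) * (Complex.exp d - Complex.exp a)
      = b * (Complex.exp a - Complex.exp d) / (a - d) := by
    field_simp
    ring
  rw [← hconj, exp_units_conj, exp_fin_two_diagonal, conj_upperUnipotent, hcorner]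

end Matrix

theorem bch_two_by_two_closed_form_general (α β : ℂ) (hα : α ≠ 0)
    (hπ : ‖α‖ < Real.pi) :
    NormedSpace.exp
        (!![α, 0; 0, -α] + (2 * α / (1 - Complex.exp (-2 * α))) • !![0, β; 0, 0])
      = NormedSpace.exp !![α, 0; 0, -α] * NormedSpace.exp !![0, β; 0, 0] := by
  set E := Complex.exp (-2 * α) with hE
  have hden : 1 - E ≠ 0 := by
    refine sub_ne_zero.mpr (Complex.exp_ne_one_of_norm_lt_two_pi ?_ ?_).symm
    · simpa using hα
    · simpa [norm_mul] using mul_lt_mul_of_pos_left hπ two_pos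
  have hsinh : Complex.exp α - Complex.exp (-α) = Complex.exp α * (1 - E) := by
    rw [hE, mul_sub, mul_one, ← Complex.exp_add]; ring_nf
  have hcorner : 2 * α / (1 - E) * β * (Complex.exp α - Complex.exp (-α)) / (α - -α)
      = Complex.exp α * β := by
    rw [hsinh]; field_simp; ring
  have hsum : !![α, 0; 0, -α] + (2 * α / (1 - E)) • !![0, β; 0, 0]
      = !![α, 2 * α / (1 - E) * β; 0, -α] := by
    simp
  have hY : NormedSpace.exp !![(0 : ℂ), β; 0, 0] = !![1, β; 0, 1] := by
    have hsq : !![(0 : ℂ), β; 0, 0] ^ 2 = 0 := by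
      simp [sq, ← Matrix.ext_iff, Fin.forall_fin_two]
    rw [NormedSpace.exp_eq_one_add_of_sq_eq_zero hsq, one_fin_two]
    simp
  rw [hsum, exp_fin_two_upperTriangular _ (self_ne_neg.mpr hα), hcorner, exp_fin_two_diagonal, hY,
    mul_fin_two]
  simp

/-- for `X = [[α,0],[0,−α]]`, `Y = [[0,β],[0,0]]` (2×2 complex
matrices) with `α ≠ 0` and `0 < |α| < π`, one has
`log(e^X e^Y) = X + (2α/(1 − e^{−2α})) Y`, i.e.
`exp(X + (2α/(1 − e^{−2α})) Y) = e^X e^Y`. -/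
theorem bch_two_by_two_closed_form (α β : ℂ) (hα : α ≠ 0)
    (h0 : 0 < ‖α‖) (hπ : ‖α‖ < Real.pi) :
    NormedSpace.exp
        (!![α, 0; 0, -α] + (2 * α / (1 - Complex.exp (-2 * α))) • !![0, β; 0, 0])
      = NormedSpace.exp !![α, 0; 0, -α] * NormedSpace.exp !![0, β; 0, 0] :=
  bch_two_by_two_closed_form_general α β hα hπ
end

section
/- Let Z = ∑_m Z_m = log(e^X e^Y) and W = ∑_m W_m = log(e^{X/2} e^Y e^{X/2}) in the completed free Lie algebra on X and Y, where W_{2j} = 0 for all j ≥ 1. Then for every p ≥ 1: Z_{2p+1} = W_{2p+1} + ∑_{j=1}^{p} (1/((2j)! 2^{2j})) ad_X^{2j} W_{2p−2j+1}, and Z_{2p} = ∑_{j=1}^{p} (1/((2j−1)! 2^{2j−1})) ad_X^{2j−1} W_{2p−2j+1}. -/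
/- Formal BCH series in the free associative algebra on two non-commuting
variables over ℚ.  A grading variable `t` (the polynomial variable) is used to
extract homogeneous components: the degree-`m` homogeneous component of
`log(e^X e^Y)` is the coefficient of `t^m` in the (sufficiently truncated)
composition of the exponential and logarithm series applied to `t•X`, `t•Y`. -/

noncomputable section

/-- The degree-`m` homogeneous component `Z_m` of the BCH series
`Z = log(e^X e^Y)`. -/
def Zc (m : ℕ) : FA := (tlog m (texp m gX * texp m gY)).coeff m

/-- The degree-`m` homogeneous component `W_m` of the symmetric BCH series
`W = log(e^{X/2} e^Y e^{X/2})`. -/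
def Wc (m : ℕ) : FA :=
  (tlog m (texp m ((1 / 2 : ℚ) • gX) * texp m gY *
      texp m ((1 / 2 : ℚ) • gX))).coeff m

/-! Work modulo `t ^ (m + 1)` in the grading variable `t` (the polynomial variable `X`), where the
truncated series behave like the exponential and the logarithm. There
`e^X e^Y = g (e^{X/2} e^Y e^{X/2}) g⁻¹` with `g = e^{X/2}`, the logarithm commutes with
conjugation, and conjugation by `e^{X/2}` is `e^{ad_X / 2}`; hence
`Z_m = ∑_k (k! 2^k)⁻¹ ad_X^k W_{m-k}`. The substitution `t ↦ -t` sends `e^{X/2} e^Y e^{X/2}` to its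
inverse, and the logarithm of an inverse is the negated logarithm, so `W_m = (-1)^(m+1) W_m` and
the even components of `W` vanish. Sorting the sum by the parity of `k` gives both formulas. -/

open Polynomial Finset
open scoped Nat

section Series

variable {R S : Type*} [Ring R] [Algebra ℚ R] [Ring S] [Algebra ℚ S]

theorem map_texp {F : Type*} [FunLike F R S] [RingHomClass F R S] (f : F) (N : ℕ) (a : R) :
    f (texp N a) = texp N (f a) := by
  simp only [texp, map_sum, map_rat_smul, map_pow]

theorem map_tlog {F : Type*} [FunLike F R S] [RingHomClass F R S] (f : F) (N : ℕ) (p : R) :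
    f (tlog N p) = tlog N (f p) := by
  simp only [tlog, map_sum, map_rat_smul, map_pow, map_sub, map_one]

theorem texp_zero (N : ℕ) : texp N (0 : R) = 1 := by
  simp [texp, sum_range_succ']

theorem tlog_one (N : ℕ) : tlog N (1 : R) = 0 := by
  simp [tlog]

theorem texp_eq_of_pow_eq_zero {a : R} {d N : ℕ} (ha : a ^ (d + 1) = 0) (hdN : d ≤ N) :
    texp N a = texp d a := by
  rw [texp, texp, ← sum_range_add_sum_Ico _ (Nat.succ_le_succ hdN), add_eq_left]
  exact sum_eq_zero fun n hn => by rw [pow_eq_zero_of_le (mem_Ico.1 hn).1 ha, smul_zero]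

theorem tlog_eq_of_pow_eq_zero {p : R} {d N : ℕ} (hp : (p - 1) ^ (d + 1) = 0) (hdN : d ≤ N) :
    tlog N p = tlog d p := by
  rw [tlog, tlog, ← sum_range_add_sum_Ico _ hdN, add_eq_left]
  refine sum_eq_zero fun k hk => ?_
  rw [pow_eq_zero_of_le (Nat.succ_le_succ (mem_Ico.1 hk).1) hp, smul_zero]

theorem texp_add_of_commute {a b : R} {N : ℕ} (hab : Commute a b)
    (hN : ∀ i j, N < i + j → a ^ i * b ^ j = 0) : texp N (a + b) = texp N a * texp N b := by
  have binom (n : ℕ) : ((n ! : ℚ)⁻¹) • (a + b) ^ n =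
      ∑ i ∈ range (n + 1), ((i ! : ℚ)⁻¹ • a ^ i) * (((n - i) ! : ℚ)⁻¹ • b ^ (n - i)) := by
    rw [hab.add_pow, smul_sum]
    refine sum_congr rfl fun i hi => ?_
    rw [smul_mul_smul, ← Nat.cast_comm, ← nsmul_eq_mul, ← Nat.cast_smul_eq_nsmul ℚ, smul_smul]
    congr 1
    rw [Nat.cast_choose ℚ (Nat.lt_succ_iff.1 (mem_range.1 hi))]
    field_simp
  rw [texp, texp, texp, sum_mul_sum, sum_congr rfl fun n _ => binom n,
    sum_range_diag_flip (N + 1) fun i j => ((i ! : ℚ)⁻¹ • a ^ i) * ((j ! : ℚ)⁻¹ • b ^ j)]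
  refine sum_congr rfl fun i hi => ?_
  rw [← sum_range_add_sum_Ico _ (Nat.sub_le (N + 1) i), left_eq_add]
  refine sum_eq_zero fun j hj => ?_
  rw [smul_mul_smul, hN i j (by have := (mem_Ico.1 hj).1; omega), smul_zero]

theorem texp_mul_texp_neg {a : R} {N : ℕ} (ha : a ^ (N + 1) = 0) :
    texp N a * texp N (-a) = 1 := by
  rw [← texp_add_of_commute (Commute.refl a).neg_right, add_neg_cancel, texp_zero]
  intro i j hij
  rw [neg_pow', ← mul_assoc, ← pow_add, pow_eq_zero_of_le hij ha, zero_mul]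

theorem texp_neg_mul_texp {a : R} {N : ℕ} (ha : a ^ (N + 1) = 0) :
    texp N (-a) * texp N a = 1 := by
  simpa using texp_mul_texp_neg (a := -a) (by rw [neg_pow', ha, zero_mul])

theorem tlog_units_conj (u : Rˣ) (N : ℕ) (p : R) :
    tlog N (u * p * ↑u⁻¹) = u * tlog N p * ↑u⁻¹ := by
  have h : (u : R) * p * ↑u⁻¹ - 1 = u * (p - 1) * ↑u⁻¹ := by
    rw [mul_sub, sub_mul, mul_one, Units.mul_inv]
  simp only [tlog, h, Units.conj_pow, mul_sum, sum_mul, mul_smul_comm, smul_mul_assoc]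

/-- Left multiplication by `a` and right multiplication by `-a` are commuting operators with
sum `ad a`, so conjugation by the truncated exponential is the truncated exponential of `ad a`. -/
theorem texp_mul_mul_texp_neg {a : R} {N : ℕ}
    (ha : ∀ i j, N < i + j → ∀ w, a ^ i * w * a ^ j = 0) (w : R) :
    texp N a * w * texp N (-a) = ∑ k ∈ range (N + 1), (k ! : ℚ)⁻¹ • (fun v => ⁅a, v⁆)^[k] w := by
  set L := LinearMap.mulLeft ℚ a
  set R' := LinearMap.mulRight ℚ (-a)
  have had : ⇑(L + R') = fun v => ⁅a, v⁆ := by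
    ext v; simp [L, R', Ring.lie_def, sub_eq_add_neg]
  have hL : texp N L = LinearMap.mulLeft ℚ (texp N a) := (map_texp (Algebra.lmul ℚ R) N a).symm
  have hR' (v : R) : texp N R' v = v * texp N (-a) := by
    simp only [texp, LinearMap.sum_apply, LinearMap.smul_apply, R', LinearMap.pow_mulRight,
      LinearMap.mulRight_apply, mul_sum, mul_smul_comm]
  have hN : ∀ i j, N < i + j → L ^ i * R' ^ j = 0 := by
    intro i j hij
    ext v
    rw [LinearMap.pow_mulLeft, LinearMap.pow_mulRight, Module.End.mul_apply,
      LinearMap.mulLeft_apply, LinearMap.mulRight_apply, neg_pow', ← mul_assoc, ← mul_assoc,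
      ha i j hij, zero_mul, LinearMap.zero_apply]
  calc texp N a * w * texp N (-a) = texp N (L + R') w := by
        rw [texp_add_of_commute (LinearMap.commute_mulLeft_right a (-a)) hN,
          Module.End.mul_apply, hR', hL, LinearMap.mulLeft_apply, mul_assoc]
    _ = _ := by
        simp only [texp, LinearMap.sum_apply, LinearMap.smul_apply, Module.End.pow_apply, had]

theorem iterate_lie_smul (c : ℚ) (x w : R) (k : ℕ) :
    (fun v => ⁅c • x, v⁆)^[k] w = c ^ k • (fun v => ⁅x, v⁆)^[k] w := by
  induction k with
  | zero => simp
  | succ k ih =>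
    rw [Function.iterate_succ_apply', Function.iterate_succ_apply', ih, Ring.lie_def, Ring.lie_def,
      smul_mul_assoc, mul_smul_comm, smul_mul_assoc, mul_smul_comm, smul_smul, smul_smul,
      smul_sub, pow_succ, mul_comm (c ^ k) c]

end Series

theorem map_iterate_lie {R S F : Type*} [Ring R] [Ring S] [FunLike F R S] [RingHomClass F R S]
    (f : F) (a w : R) (k : ℕ) : f ((fun v => ⁅a, v⁆)^[k] w) = (fun v => ⁅f a, v⁆)^[k] (f w) :=
  Function.Semiconj.iterate_right (fun v => by simp only [Ring.lie_def, map_sub, map_mul]) k w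

namespace Finset

variable {M : Type*} [AddCommMonoid M]

theorem sum_range_two_mul (n : ℕ) (f : ℕ → M) :
    ∑ k ∈ range (2 * n), f k = ∑ j ∈ range n, (f (2 * j) + f (2 * j + 1)) := by
  induction n with
  | zero => simp
  | succ n ih =>
    rw [mul_add, mul_one, sum_range_succ, sum_range_succ, sum_range_succ, ih, add_assoc]

theorem sum_range_two_mul_of_odd_eq_zero {n : ℕ} {f : ℕ → M} (hf : ∀ j < n, f (2 * j + 1) = 0) :
    ∑ k ∈ range (2 * n), f k = ∑ j ∈ range n, f (2 * j) := by
  rw [sum_range_two_mul]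
  exact sum_congr rfl fun j hj => by rw [hf j (mem_range.1 hj), add_zero]

theorem sum_range_two_mul_of_even_eq_zero {n : ℕ} {f : ℕ → M} (hf : ∀ j < n, f (2 * j) = 0) :
    ∑ k ∈ range (2 * n), f k = ∑ j ∈ range n, f (2 * j + 1) := by
  rw [sum_range_two_mul]
  exact sum_congr rfl fun j hj => by rw [hf j (mem_range.1 hj), zero_add]

theorem sum_Icc_one_eq_sum_range (n : ℕ) (f : ℕ → M) :
    ∑ j ∈ Icc 1 n, f j = ∑ j ∈ range n, f (j + 1) := by
  rw [← Ico_add_one_right_eq_Icc, sum_Ico_eq_sum_range, Nat.add_sub_cancel]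
  simp only [add_comm 1]

end Finset

namespace Polynomial

variable (R : Type*) [Ring R]

def truncCon (n : ℕ) : RingCon R[X] where
  r p q := X ^ n ∣ p - q
  iseqv :=
    { refl := fun p => by simp
      symm := fun h => by rw [← neg_sub, dvd_neg]; exact h
      trans := fun h h' => by simpa using dvd_add h h' }
  add' h h' := by rw [add_sub_add_comm]; exact dvd_add h h'
  mul' {w x y z} h h' := by
    obtain ⟨c, hc⟩ := h'
    rw [show w * y - x * z = w * (y - z) + (w - x) * z by noncomm_ring, hc, ← mul_assoc,
      ← (commute_X_pow w n).eq, mul_assoc]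
    exact dvd_add (dvd_mul_right _ _) (dvd_mul_of_dvd_left h z)

variable {R}

theorem truncCon_mk'_eq_iff {n : ℕ} {p q : R[X]} :
    (truncCon R n).mk' p = (truncCon R n).mk' q ↔ X ^ n ∣ p - q :=
  RingCon.eq _

theorem truncCon_mk'_eq_zero_iff {n : ℕ} {p : R[X]} :
    (truncCon R n).mk' p = 0 ↔ X ^ n ∣ p := by
  rw [← map_zero (truncCon R n).mk', truncCon_mk'_eq_iff, sub_zero]

theorem coeff_eq_of_truncCon_mk'_eq {n d : ℕ} {p q : R[X]}
    (h : (truncCon R n).mk' p = (truncCon R n).mk' q) (hd : d < n) : p.coeff d = q.coeff d := by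
  rw [← sub_eq_zero, ← coeff_sub]
  exact X_pow_dvd_iff.1 (truncCon_mk'_eq_iff.1 h) d hd

theorem X_pow_dvd_pow_of_X_dvd {a : R[X]} (ha : X ∣ a) (i : ℕ) : X ^ i ∣ a ^ i := by
  obtain ⟨c, rfl⟩ := ha
  rw [(commute_X c).mul_pow]
  exact dvd_mul_right _ _

theorem truncCon_mk'_pow_mul_mul_pow_eq_zero {n i j : ℕ} {a : R[X]} (ha : X ∣ a)
    (hij : n ≤ i + j) (w : (truncCon R n).Quotient) :
    (truncCon R n).mk' a ^ i * w * (truncCon R n).mk' a ^ j = 0 := by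
  obtain ⟨w, rfl⟩ := (truncCon R n).mk'_surjective w
  rw [← map_pow, ← map_pow, ← map_mul, ← map_mul, truncCon_mk'_eq_zero_iff]
  obtain ⟨c, hc⟩ := X_pow_dvd_pow_of_X_dvd ha i
  obtain ⟨d, hd⟩ := X_pow_dvd_pow_of_X_dvd ha j
  rw [hc, hd, show X ^ i * c * w * (X ^ j * d) = X ^ i * (c * w * X ^ j) * d by noncomm_ring,
    ← (commute_X_pow (c * w) j).eq, ← mul_assoc, ← pow_add, mul_assoc]
  exact (pow_dvd_pow X hij).mul_right _

theorem truncCon_mk'_pow_eq_zero {n : ℕ} {a : R[X]} (ha : X ∣ a) :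
    (truncCon R n).mk' a ^ n = 0 := by
  simpa using truncCon_mk'_pow_mul_mul_pow_eq_zero ha (Nat.le_add_right n 0) 1

theorem X_pow_succ_dvd_of_derivative {K : Type*} [Ring K] [NoZeroDivisors K] [CharZero K]
    {f : K[X]} {n : ℕ} (h0 : X ∣ f) (h : X ^ n ∣ derivative f) : X ^ (n + 1) ∣ f := by
  rw [X_pow_dvd_iff] at h ⊢
  rintro (_ | d) hd
  · exact X_dvd_iff.1 h0
  · have hd' := h d (by omega)
    rw [coeff_derivative] at hd'
    exact (mul_eq_zero.1 hd').resolve_right (Nat.cast_add_one_ne_zero d)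

theorem derivative_tlog {K : Type*} [CommRing K] [Algebra ℚ K] (N : ℕ) (P : K[X]) :
    derivative (tlog N P) = (∑ k ∈ range N, (1 - P) ^ k) * derivative P := by
  rw [tlog, map_sum, sum_mul]
  refine sum_congr rfl fun k _ => ?_
  have hc : (-1 : ℚ) ^ k / (k + 1) * ((k + 1 : ℕ) : ℚ) = (-1) ^ k := by
    push_cast; field_simp
  rw [derivative_smul, derivative_pow, derivative_sub, derivative_one, sub_zero,
    Nat.add_sub_cancel, C_eq_natCast, mul_assoc, ← nsmul_eq_mul, ← Nat.cast_smul_eq_nsmul ℚ,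
    smul_smul, hc, ← smul_mul_assoc, ← _root_.smul_pow, neg_one_smul, neg_sub]

/-- `∑ i ≤ M, (-X) ^ i` inverts `1 + X` modulo `X ^ (M + 1)`, so this is
`log (1 + X) + log (1 + X)⁻¹ = 0`. It is checked on the derivative, where it reduces to relations
between geometric sums. -/
theorem X_pow_succ_dvd_tlog_add_tlog_geom_sum (M : ℕ) :
    (X : ℚ[X]) ^ (M + 1) ∣ tlog M (1 + X) + tlog M (∑ i ∈ range (M + 1), (-X) ^ i) := by
  set s : ℚ[X] := ∑ i ∈ range (M + 1), (-X) ^ i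
  set π := (truncCon ℚ M).mk'
  have hs : (1 + X) * s = 1 - (-X) ^ (M + 1) := by rw [← sub_neg_eq_add, mul_neg_geom_sum]
  have hsX : X ∣ 1 - s := by
    rw [X_dvd_iff, coeff_zero_eq_eval_zero]
    simp [s, eval_finsetSum, sum_range_succ']
  have hπX : π (-X) ^ M = 0 := truncCon_mk'_pow_eq_zero (dvd_neg.2 dvd_rfl)
  have hinv {p : ℚ[X]} (hp : X ∣ 1 - p) : π p * π (∑ k ∈ range M, (1 - p) ^ k) = 1 := by
    have hg := mul_neg_geom_sum (1 - p) M
    rw [sub_sub_cancel] at hg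
    rw [← map_mul, hg, map_sub, map_pow, truncCon_mk'_pow_eq_zero hp, map_one, sub_zero]
  have hinvX := hinv (p := 1 + X) (by simp)
  have hinvs := hinv hsX
  have hXs : π (1 + X) * π s = 1 := by
    rw [← map_mul, hs, map_sub, map_one, map_pow, pow_succ, hπX, zero_mul, sub_zero]
  have hXs' : π s + π (1 + X) * π (derivative s) = 0 := by
    have hd := congrArg (fun f => π (derivative f)) hs
    rw [derivative_mul, derivative_sub, derivative_pow, map_add, map_sub, map_mul, map_mul,
      map_mul, map_mul, map_pow, Nat.add_sub_cancel, hπX] at hd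
    simpa using hd
  apply X_pow_succ_dvd_of_derivative
  · rw [X_dvd_iff, coeff_zero_eq_eval_zero, ← coe_evalRingHom, map_add, map_tlog, map_tlog]
    simp [s, tlog_one]
  · rw [← truncCon_mk'_eq_zero_iff, derivative_add, derivative_tlog, derivative_tlog]
    simp only [map_add, map_mul, derivative_one, derivative_X, zero_add, mul_one]
    linear_combination (-(π (∑ k ∈ range M, (1 - (1 + X)) ^ k)
      + π (∑ k ∈ range M, (1 - s) ^ k) * π (derivative s))) * hXs + π s * hinvX
      + π (1 + X) * π (derivative s) * hinvs + hXs'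

end Polynomial

theorem tlog_add_tlog_eq_zero {R : Type*} [Ring R] [Algebra ℚ R] {p q : R} {M : ℕ}
    (hp : (p - 1) ^ (M + 1) = 0) (hqp : q * p = 1) : tlog M p + tlog M q = 0 := by
  set u := p - 1
  have hpu : p = 1 + u := by simp [u]
  have hq : q = ∑ i ∈ range (M + 1), (-u) ^ i := by
    have hs : p * ∑ i ∈ range (M + 1), (-u) ^ i = 1 := by
      rw [hpu, ← sub_neg_eq_add, mul_neg_geom_sum, neg_pow, hp, mul_zero, sub_zero]
    rw [← one_mul (∑ i ∈ range (M + 1), (-u) ^ i), ← hqp, mul_assoc, hs, mul_one]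
  obtain ⟨c, hc⟩ := X_pow_succ_dvd_tlog_add_tlog_geom_sum M
  have := congrArg (aeval u) hc
  simpa [map_tlog, map_sum, ← hpu, ← hq, hp] using this

namespace Polynomial

variable {R : Type*} [Ring R]

/-- The substitution `X ↦ -X`; `Polynomial.comp` is multiplicative only over a commutative base. -/
def negX : R[X] →+* R[X] :=
  eval₂RingHom' C (-X) fun a => (commute_X (C a)).symm.neg_right

theorem negX_C (x : R) : negX (C x) = C x := eval₂_C _ _

theorem negX_X : negX (X : R[X]) = -X := eval₂_X _ _

theorem negX_C_mul_X (x : R) : negX (C x * X) = -(C x * X) := by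
  rw [map_mul, negX_C, negX_X, mul_neg]

theorem coeff_negX (p : R[X]) (d : ℕ) : (negX p).coeff d = (-1) ^ d * p.coeff d := by
  induction p using Polynomial.induction_on' with
  | add p q hp hq => rw [map_add, coeff_add, coeff_add, hp, hq, mul_add]
  | monomial n a =>
    rw [← C_mul_X_pow_eq_monomial, map_mul, map_pow, negX_C, negX_X, neg_pow, ← C_1, ← C_neg,
      ← C_pow, ← mul_assoc, ← C_mul, coeff_C_mul_X_pow, coeff_C_mul_X_pow]
    rcases eq_or_ne d n with rfl | h
    · rw [if_pos rfl, if_pos rfl, ((Commute.neg_one_left a).pow_left d).eq]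
    · rw [if_neg h, if_neg h, mul_zero]

theorem coeff_lie_C_mul_X_succ (x : R) (u : R[X]) (d : ℕ) :
    (⁅C x * X, u⁆).coeff (d + 1) = ⁅x, u.coeff d⁆ := by
  rw [Ring.lie_def, Ring.lie_def, coeff_sub, mul_assoc (C x), coeff_C_mul, coeff_X_mul,
    ← mul_assoc u, coeff_mul_X, coeff_mul_C]

theorem coeff_iterate_lie_C_mul_X (x : R) (w : R[X]) (n k : ℕ) :
    ((fun v => ⁅C x * X, v⁆)^[k] w).coeff (n + k) = (fun v => ⁅x, v⁆)^[k] (w.coeff n) := by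
  induction k with
  | zero => rfl
  | succ k ih =>
    rw [Function.iterate_succ_apply', Function.iterate_succ_apply', ← add_assoc,
      coeff_lie_C_mul_X_succ, ih]

theorem truncCon_mk'_texp [Algebra ℚ R] {a : R[X]} {d N : ℕ} (ha : X ∣ a) (hdN : d ≤ N) :
    (truncCon R (d + 1)).mk' (texp N a) = (truncCon R (d + 1)).mk' (texp d a) := by
  rw [map_texp, map_texp, texp_eq_of_pow_eq_zero (truncCon_mk'_pow_eq_zero ha) hdN]

end Polynomial

theorem X_dvd_gY : (X : FA[X]) ∣ gY := Dvd.intro _ (X_mul_C Yg)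

theorem X_dvd_smul_gX (c : ℚ) : (X : FA[X]) ∣ c • gX :=
  Dvd.intro (c • C Xg) (by rw [mul_smul_comm, X_mul_C]; rfl)

def symProd (N : ℕ) : FA[X] :=
  texp N ((1 / 2 : ℚ) • gX) * texp N gY * texp N ((1 / 2 : ℚ) • gX)

theorem X_dvd_symProd_sub_one (N : ℕ) : X ∣ symProd N - 1 := by
  have hc {a : FA[X]} (ha : X ∣ a) : constantCoeff (texp N a) = 1 := by
    rw [map_texp, constantCoeff_apply, X_dvd_iff.1 ha, texp_zero]
  rw [X_dvd_iff, coeff_sub, coeff_one_zero, ← constantCoeff_apply, symProd, map_mul, map_mul,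
    hc (X_dvd_smul_gX _), hc X_dvd_gY, mul_one, mul_one, sub_self]

theorem coeff_tlog_symProd {d m : ℕ} (hd : d ≤ m) : (tlog m (symProd m)).coeff d = Wc d := by
  refine coeff_eq_of_truncCon_mk'_eq ?_ d.lt_succ_self
  have hQ : (truncCon FA (d + 1)).mk' (symProd m) = (truncCon FA (d + 1)).mk' (symProd d) := by
    simp only [symProd, map_mul, truncCon_mk'_texp (X_dvd_smul_gX _) hd,
      truncCon_mk'_texp X_dvd_gY hd]
  have hQ1 : ((truncCon FA (d + 1)).mk' (symProd d) - 1) ^ (d + 1) = 0 := by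
    rw [← map_one (truncCon FA (d + 1)).mk', ← map_sub,
      truncCon_mk'_pow_eq_zero (X_dvd_symProd_sub_one d)]
  rw [map_tlog, map_tlog, hQ, tlog_eq_of_pow_eq_zero hQ1 hd]
  rfl

/-- `negX` sends `symProd m` to its inverse modulo `X ^ (m + 1)`, so `W_m = (-1) ^ (m + 1) W_m`. -/
theorem Wc_eq_zero_of_even {m : ℕ} (hm : Even m) : Wc m = 0 := by
  set π := (truncCon FA (m + 1)).mk'
  have hinv {a : FA[X]} (ha : X ∣ a) : texp m (-π a) * texp m (π a) = 1 :=
    texp_neg_mul_texp (truncCon_mk'_pow_eq_zero ha)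
  have hflip : π (negX (symProd m)) * π (symProd m) = 1 := by
    have hX : negX ((1 / 2 : ℚ) • gX) = -((1 / 2 : ℚ) • gX) := by
      rw [map_rat_smul, gX, negX_C_mul_X, smul_neg]
    have hY : negX gY = -gY := negX_C_mul_X Yg
    simp only [symProd, map_mul, map_texp, hX, hY, map_neg]
    rw [show ∀ a b c d e f : (truncCon FA (m + 1)).Quotient,
        a * b * c * (d * e * f) = a * (b * (c * d) * e) * f by intros; noncomm_ring,
      hinv (X_dvd_smul_gX _), mul_one, hinv X_dvd_gY, mul_one, hinv (X_dvd_smul_gX _)]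
  have hQ1 : (π (symProd m) - 1) ^ (m + 1) = 0 := by
    rw [← map_one π, ← map_sub, truncCon_mk'_pow_eq_zero (X_dvd_symProd_sub_one m)]
  have h := tlog_add_tlog_eq_zero hQ1 hflip
  rw [← map_tlog π, ← map_tlog π, ← map_tlog negX, ← map_add, ← map_zero π] at h
  have hc := coeff_eq_of_truncCon_mk'_eq h m.lt_succ_self
  rw [coeff_add, coeff_negX, hm.neg_one_pow, one_mul, coeff_zero, coeff_tlog_symProd le_rfl,
    ← two_smul ℚ, smul_eq_zero] at hc
  exact hc.resolve_left two_ne_zero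

theorem Zc_eq_sum (m : ℕ) :
    Zc m = ∑ k ∈ range (m + 1), ((k ! : ℚ) * 2 ^ k)⁻¹ • (fun v => ⁅Xg, v⁆)^[k] (Wc (m - k)) := by
  set π := (truncCon FA (m + 1)).mk'
  set a : FA[X] := (1 / 2 : ℚ) • gX
  have hXa : X ∣ a := X_dvd_smul_gX _
  have ha : π a ^ (m + 1) = 0 := truncCon_mk'_pow_eq_zero hXa
  let g : (truncCon FA (m + 1)).Quotientˣ :=
    ⟨texp m (π a), texp m (-π a), texp_mul_texp_neg ha, texp_neg_mul_texp ha⟩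
  have hgX : π (texp m gX) = g * g := by
    have h2a : gX = a + a := by rw [← add_smul]; norm_num
    rw [map_texp, h2a, map_add, texp_add_of_commute (Commute.refl _) fun i j hij => by
      rw [← pow_add, pow_eq_zero_of_le hij ha]]
  have hsym : π (symProd m) = g * π (texp m gY) * g := by
    simp only [symProd, map_mul, map_texp]
    rfl
  have key : π (tlog m (texp m gX * texp m gY)) = π (∑ k ∈ range (m + 1),
      (k ! : ℚ)⁻¹ • (fun v => ⁅a, v⁆)^[k] (tlog m (symProd m))) := by
    calc π (tlog m (texp m gX * texp m gY)) = tlog m (g * π (symProd m) * ↑g⁻¹) := by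
          rw [map_tlog, map_mul, hgX, hsym, ← mul_assoc, ← mul_assoc, Units.mul_inv_cancel_right]
      _ = g * π (tlog m (symProd m)) * ↑g⁻¹ := by rw [tlog_units_conj, map_tlog]
      _ = _ := by
          refine (texp_mul_mul_texp_neg (a := π a) (fun i j hij =>
            truncCon_mk'_pow_mul_mul_pow_eq_zero hXa hij) _).trans ?_
          simp only [map_sum, map_rat_smul, map_iterate_lie]
  have ha' : a = C ((1 / 2 : ℚ) • Xg) * X := by rw [← smul_C, smul_mul_assoc]; rfl
  rw [Zc, coeff_eq_of_truncCon_mk'_eq key m.lt_succ_self, finsetSum_coeff]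
  refine sum_congr rfl fun k hk => ?_
  obtain ⟨n, rfl⟩ : ∃ n, m = n + k := ⟨m - k, by have := mem_range.1 hk; omega⟩
  rw [coeff_smul, ha', coeff_iterate_lie_C_mul_X, iterate_lie_smul, smul_smul, Nat.add_sub_cancel,
    coeff_tlog_symProd (Nat.le_add_right n k), mul_inv, one_div, inv_pow]

/-- for every `p ≥ 1`,
`Z_{2p+1} = W_{2p+1} + ∑_{j=1}^{p} (1/((2j)! 2^{2j})) ad_X^{2j} W_{2p−2j+1}` and
`Z_{2p} = ∑_{j=1}^{p} (1/((2j−1)! 2^{2j−1})) ad_X^{2j−1} W_{2p−2j+1}`. -/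
theorem bch_components_from_symmetric_bch :
    ∀ p : ℕ, 1 ≤ p →
      (Zc (2 * p + 1)
          = Wc (2 * p + 1)
            + ∑ j ∈ Finset.Icc 1 p,
                ((((2 * j).factorial : ℚ) * 2 ^ (2 * j))⁻¹) •
                  ((fun v => ⁅Xg, v⁆)^[2 * j] (Wc (2 * p - 2 * j + 1))))
      ∧ (Zc (2 * p)
          = ∑ j ∈ Finset.Icc 1 p,
              ((((2 * j - 1).factorial : ℚ) * 2 ^ (2 * j - 1))⁻¹) •
                ((fun v => ⁅Xg, v⁆)^[2 * j - 1] (Wc (2 * p - 2 * j + 1)))) := by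
  have hW {l : ℕ} (hl : Even l) (c : ℚ) (k : ℕ) : c • (fun v => ⁅Xg, v⁆)^[k] (Wc l) = 0 := by
    rw [Wc_eq_zero_of_even hl, Function.iterate_fixed (by simp [Ring.lie_def]), smul_zero]
  intro p _
  constructor
  · rw [Zc_eq_sum, show 2 * p + 1 + 1 = 2 * (p + 1) by ring, sum_range_two_mul_of_odd_eq_zero,
      sum_range_succ', sum_Icc_one_eq_sum_range, add_comm]
    · refine congrArg₂ _ (by simp) (sum_congr rfl fun j hj => ?_)
      rw [show 2 * p + 1 - 2 * (j + 1) = 2 * p - 2 * (j + 1) + 1 by have := mem_range.1 hj; omega]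
    · exact fun j hj => hW ⟨p - j, by omega⟩ _ _
  · rw [Zc_eq_sum, sum_range_succ, Nat.sub_self, hW ⟨0, rfl⟩, add_zero,
      sum_range_two_mul_of_even_eq_zero, sum_Icc_one_eq_sum_range]
    · refine sum_congr rfl fun j hj => ?_
      rw [show 2 * (j + 1) - 1 = 2 * j + 1 by omega,
        show 2 * p - (2 * j + 1) = 2 * p - 2 * (j + 1) + 1 by have := mem_range.1 hj; omega]
    · exact fun j hj => hW ⟨p - j, by omega⟩ _ _
end
end
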